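/- Let a ∈ ℂ and let I ⊆ F be the two-sided ideal generated by the three elements x₂x₁ − x₁x₂ − x₁², x₃x₁ − x₁x₃ − x₁x₂, and x₃x₂ − x₂x₃ − x₂² + x₁x₃ + x₁x₂ − a x₁². Then the images in F/I of the monomials x₁^{a₁} x₂^{a₂} x₃^{a₃}, over all a₁, a₂, a₃ ∈ ℕ, form a ℂ-basis of F/I. (This quotient is the Nichols algebra associated to the braiding of type R_{1,9} with t = 1 and b = 1; it has Gelfand–Kirillov dimension 3.) -/

import Mathlib

/-- The free associative unital `ℂ`-algebra on three generators. -/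
abbrev F : Type := FreeAlgebra ℂ (Fin 3)

/-- The generators `x₁ = X 0`, `x₂ = X 1`, `x₃ = X 2`. -/
noncomputable def X (i : Fin 3) : F := FreeAlgebra.ι ℂ i

/-- Generators: `x₂x₁ − x₁x₂ − x₁²`, `x₃x₁ − x₁x₃ − x₁x₂`, `x₃x₂ − x₂x₃ − x₂² + x₁x₃ + x₁x₂ − a x₁²`. -/
noncomputable def S (a : ℂ) : Set F :=
  {X 1 * X 0 - X 0 * X 1 - X 0 * X 0,
   X 2 * X 0 - X 0 * X 2 - X 0 * X 1,
   X 2 * X 1 - X 1 * X 2 - X 1 * X 1 + X 0 * X 2 + X 0 * X 1 - a • (X 0 * X 0)}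

/-- The relation whose two-sided-ideal closure is the ideal generated by `S`;
`RingQuot rel` is the quotient `F/I`. -/
def rel (a : ℂ) : F → F → Prop := fun x y => x ∈ S a ∧ y = 0


/-! Spanning: the three relations rewrite `x₂x₁`, `x₃x₁` and `x₃x₂` in terms of words in which
the indices do not decrease, so the span of the ordered monomials contains `1` and is stable under
left multiplication by each generator.

Independence: `F/I` acts on `ℂ[X₀, X₁, X₂]` by `x₁ ↦ X₀`, `x₂ ↦ X₀ (θ + X₁)` and
`x₃ ↦ X₀ (θ(θ-1)/2 + X₁θ + X₂ + a∂₁)`, where `θ = X₀∂₀`. Give `X₀, X₁, X₂` the weights `0, 1, 2`.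
The three operators send a monomial `m` to `X₀m`, `X₀X₁m`, `X₀X₂m` respectively, plus terms of
smaller weight than the image, so `x₁^i x₂^j x₃^k` sends `1` to
`X₀^(i+j+k) X₁^j X₂^k` plus terms of smaller weight. These leading monomials are pairwise distinct,
and a triangularity argument gives linear independence. -/

theorem linearIndependent_of_triangular {ι K V α : Type*} [DivisionRing K] [AddCommGroup V]
    [Module K V] [LinearOrder α] {v : ι → V} (key : ι → α) (f : ι → V →ₗ[K] K)
    (hdiag : ∀ i, f i (v i) ≠ 0) (hlower : ∀ i j, j ≠ i → key j ≤ key i → f i (v j) = 0) :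
    LinearIndependent K v := by
  classical
  refine linearIndependent_iff_finset_linearIndependent.2 fun s => ?_
  induction s using Finset.induction_on_max_value key with
  | empty => exact linearIndependent_empty_type
  | insert i s his hmax ih =>
    change LinearIndepOn K v _
    rw [Finset.coe_insert, linearIndepOn_insert (by simpa using his)]
    refine ⟨ih, fun hspan => hdiag i ?_⟩
    suffices Submodule.span K (v '' s) ≤ LinearMap.ker (f i) from this hspan
    rw [Submodule.span_le]
    rintro _ ⟨j, hj, rfl⟩
    exact hlower i j (by rintro rfl; exact his hj) (hmax j hj)

theorem Submodule.mul_mem_span_range {R A ι : Type*} [CommSemiring R] [Semiring A] [Algebra R A]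
    {v : ι → A} {x : A} (h : ∀ i, x * v i ∈ span R (Set.range v)) {w : A}
    (hw : w ∈ span R (Set.range v)) : x * w ∈ span R (Set.range v) :=
  (span_le (p := (span R (Set.range v)).comap (LinearMap.mulLeft R x))).2
    (Set.range_subset_iff.2 h) hw

theorem Submodule.eq_top_of_one_mem_of_mul_mem {R A : Type*} [CommSemiring R] [Semiring A]
    [Algebra R A] {s : Set A} (hs : Algebra.adjoin R s = ⊤) {N : Submodule R A} (h1 : 1 ∈ N)
    (hmul : ∀ x ∈ s, ∀ v ∈ N, x * v ∈ N) : N = ⊤ := by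
  let stabilizer : Subalgebra R A :=
    { carrier := {x | ∀ v ∈ N, x * v ∈ N}
      mul_mem' := fun hx hy v hv => by rw [mul_assoc]; exact hx _ (hy v hv)
      add_mem' := fun hx hy v hv => by rw [add_mul]; exact N.add_mem (hx v hv) (hy v hv)
      algebraMap_mem' := fun r v hv => by rw [← Algebra.smul_def]; exact N.smul_mem r hv }
  have htop : ⊤ ≤ stabilizer := hs ▸ Algebra.adjoin_le hmul
  exact eq_top_iff'.2 fun x => by simpa using htop trivial 1 h1

namespace MvPolynomial

variable {σ R : Type*} [CommRing R] (w : σ → ℕ)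

noncomputable def weightedDegreeLT (n : ℕ) : Submodule R (MvPolynomial σ R) :=
  restrictSupport R {μ | Finsupp.weight w μ < n}

def HasLeadingMonomial (p : MvPolynomial σ R) (μ : σ →₀ ℕ) : Prop :=
  p - monomial μ 1 ∈ weightedDegreeLT w (Finsupp.weight w μ)

theorem hasLeadingMonomial_one : HasLeadingMonomial w (1 : MvPolynomial σ R) 0 := by
  simp [HasLeadingMonomial]

variable {w}

theorem weightedDegreeLT_mono {m n : ℕ} (h : m ≤ n) :
    weightedDegreeLT (R := R) w m ≤ weightedDegreeLT w n :=
  restrictSupport_mono R fun _ hμ => lt_of_lt_of_le hμ h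

theorem coeff_eq_zero_of_mem_weightedDegreeLT {n : ℕ} {p : MvPolynomial σ R}
    (hp : p ∈ weightedDegreeLT w n) {ν : σ →₀ ℕ} (hν : n ≤ Finsupp.weight w ν) : coeff ν p = 0 :=
  notMem_support_iff.1 fun h => (hp h).not_ge hν

theorem X_mul_mem_weightedDegreeLT {n : ℕ} {p : MvPolynomial σ R} (hp : p ∈ weightedDegreeLT w n)
    (i : σ) : X i * p ∈ weightedDegreeLT w (n + w i) := by
  classical
  rw [weightedDegreeLT, mem_restrictSupport_iff, support_X_mul]
  intro μ hμ
  obtain ⟨ν, hν, rfl⟩ := Finset.mem_map.1 hμ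
  simpa [add_comm, Finsupp.weight_single] using Nat.add_lt_add_right (hp hν) (w i)

theorem pderiv_mem_weightedDegreeLT {n : ℕ} {p : MvPolynomial σ R} (hp : p ∈ weightedDegreeLT w n)
    (i : σ) : pderiv i p ∈ weightedDegreeLT w n := by
  rw [weightedDegreeLT, restrictSupport_eq_span] at hp
  refine (Submodule.span_le (p := (weightedDegreeLT w n).comap (pderiv i).toLinearMap)).2 ?_ hp
  rintro _ ⟨μ, hμ, rfl⟩
  have hle : Finsupp.weight w (μ - Finsupp.single i 1) ≤ Finsupp.weight w μ := by
    obtain ⟨d, hd⟩ := exists_add_of_le (tsub_le_self : μ - Finsupp.single i 1 ≤ μ)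
    have := congrArg (Finsupp.weight w) hd
    rw [map_add] at this
    omega
  change pderiv i (monomial μ 1) ∈ weightedDegreeLT w n
  rw [pderiv_monomial, weightedDegreeLT, monomial_mem_restrictSupport]
  exact Or.inl (lt_of_le_of_lt hle hμ)

theorem pderiv_comm (i j : σ) (p : MvPolynomial σ R) :
    pderiv i (pderiv j p) = pderiv j (pderiv i p) := by
  classical
  induction p using MvPolynomial.induction_on with
  | C c => simp
  | add p q hp hq => simp [hp, hq]
  | mul_X p k hp =>
    simp only [pderiv_mul, pderiv_X, Pi.single_apply]
    split_ifs <;> simp_all <;> ring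

namespace HasLeadingMonomial

variable {p : MvPolynomial σ R} {μ : σ →₀ ℕ}

theorem mem_weightedDegreeLT_succ (h : HasLeadingMonomial w p μ) :
    p ∈ weightedDegreeLT w (Finsupp.weight w μ + 1) := by
  have hμ : monomial μ (1 : R) ∈ weightedDegreeLT w (Finsupp.weight w μ + 1) := by
    simp [weightedDegreeLT]
  simpa using add_mem (weightedDegreeLT_mono (Nat.le_succ _) h) hμ

theorem X_mul (h : HasLeadingMonomial w p μ) (i : σ) :
    HasLeadingMonomial w (X i * p) (Finsupp.single i 1 + μ) := by
  rw [HasLeadingMonomial, monomial_single_add, pow_one, ← mul_sub, map_add,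
    Finsupp.weight_single, one_smul, add_comm]
  exact X_mul_mem_weightedDegreeLT h i

theorem add_of_mem (h : HasLeadingMonomial w p μ) {q : MvPolynomial σ R}
    (hq : q ∈ weightedDegreeLT w (Finsupp.weight w μ)) : HasLeadingMonomial w (p + q) μ := by
  rw [HasLeadingMonomial, add_sub_right_comm]
  exact add_mem h hq

theorem pow_apply {f : Module.End R (MvPolynomial σ R)} {d : σ →₀ ℕ}
    (hf : ∀ {p μ}, HasLeadingMonomial w p μ → HasLeadingMonomial w (f p) (d + μ))
    (h : HasLeadingMonomial w p μ) (n : ℕ) : HasLeadingMonomial w ((f ^ n) p) (n • d + μ) := by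
  induction n with
  | zero => simpa
  | succ n ih => rw [pow_succ', Module.End.mul_apply, succ_nsmul', add_assoc]; exact hf ih

theorem coeff_self (h : HasLeadingMonomial w p μ) : coeff μ p = 1 := by
  classical
  have := coeff_eq_zero_of_mem_weightedDegreeLT h le_rfl
  rwa [coeff_sub, coeff_monomial, if_pos rfl, sub_eq_zero] at this

theorem coeff_eq_zero (h : HasLeadingMonomial w p μ) {ν : σ →₀ ℕ}
    (hν : Finsupp.weight w μ ≤ Finsupp.weight w ν) (hne : μ ≠ ν) : coeff ν p = 0 := by
  classical
  have := coeff_eq_zero_of_mem_weightedDegreeLT h hν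
  rwa [coeff_sub, coeff_monomial, if_neg hne, sub_zero] at this

end HasLeadingMonomial

end MvPolynomial

namespace NicholsR19

structure SatisfiesRelations {A : Type*} [Ring A] [Algebra ℂ A] (a : ℂ) (z : Fin 3 → A) :
    Prop where
  rel₁ : z 1 * z 0 = z 0 * z 1 + z 0 * z 0
  rel₂ : z 2 * z 0 = z 0 * z 2 + z 0 * z 1
  rel₃ : z 2 * z 1 = z 1 * z 2 + z 1 * z 1 - z 0 * z 2 - z 0 * z 1 + a • (z 0 * z 0)

theorem forall_map_S_eq_zero_iff {A : Type*} [Ring A] [Algebra ℂ A] (a : ℂ) (φ : F →ₐ[ℂ] A) :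
    (∀ g ∈ S a, φ g = 0) ↔ SatisfiesRelations a (fun i => φ (X i)) := by
  simp only [S, Set.mem_insert_iff, Set.mem_singleton_iff, forall_eq_or_imp, forall_eq, map_sub,
    map_add, map_mul, map_smul]
  constructor
  · rintro ⟨h₁, h₂, h₃⟩
    exact ⟨by rw [← sub_eq_zero, ← h₁]; abel, by rw [← sub_eq_zero, ← h₂]; abel,
      by rw [← sub_eq_zero, ← h₃]; abel⟩
  · rintro ⟨h₁, h₂, h₃⟩
    exact ⟨by rw [h₁]; abel, by rw [h₂]; abel, by rw [h₃]; abel⟩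

noncomputable def liftOfRelations {A : Type*} [Ring A] [Algebra ℂ A] {a : ℂ} {z : Fin 3 → A}
    (hz : SatisfiesRelations a z) : RingQuot (rel a) →ₐ[ℂ] A :=
  RingQuot.liftAlgHom ℂ ⟨FreeAlgebra.lift ℂ z, by
    rintro g _ ⟨hg, rfl⟩
    rw [map_zero]
    exact (forall_map_S_eq_zero_iff a _).2 (by simpa [X] using hz) g hg⟩

theorem liftOfRelations_mk {A : Type*} [Ring A] [Algebra ℂ A] {a : ℂ} {z : Fin 3 → A}
    (hz : SatisfiesRelations a z) (f : F) :
    liftOfRelations hz (RingQuot.mkAlgHom ℂ (rel a) f) = FreeAlgebra.lift ℂ z f :=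
  RingQuot.liftAlgHom_mkAlgHom_apply ..

section Representation

open MvPolynomial hiding X

local notation "V" => MvPolynomial (Fin 3) ℂ

local notation "ξ" => (MvPolynomial.X : Fin 3 → V)

local notation "L" => weightedDegreeLT (R := ℂ) (Fin.val : Fin 3 → ℕ)

noncomputable def mulX (i : Fin 3) : Module.End ℂ V := LinearMap.mulLeft ℂ (ξ i)

noncomputable def euler : Module.End ℂ V := mulX 0 * (pderiv 0).toLinearMap

noncomputable def q₂ : Module.End ℂ V := euler + mulX 1

noncomputable def q₃ (a : ℂ) : Module.End ℂ V :=
  (2⁻¹ : ℂ) • (euler * (euler - 1)) + mulX 1 * euler + mulX 2 + a • (pderiv 1).toLinearMap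

/-- Since `euler * X₀ = X₀ * (euler + 1)`, the relations for `op a` amount to
`q₂ X₀ = X₀ (q₂ + 1)`, `q₃ X₀ = X₀ (q₃ + q₂)` and `q₃ q₂ = q₂ q₃ + a`. -/
noncomputable def op (a : ℂ) : Fin 3 → Module.End ℂ V := ![mulX 0, mulX 0 * q₂, mulX 0 * q₃ a]

theorem op_zero (a : ℂ) : op a 0 = mulX 0 := rfl

theorem op_one (a : ℂ) : op a 1 = mulX 0 * q₂ := rfl

theorem op_two (a : ℂ) : op a 2 = mulX 0 * q₃ a := rfl

theorem euler_apply (p : V) : euler p = ξ 0 * pderiv 0 p := rfl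

theorem mulX_apply (i : Fin 3) (p : V) : mulX i p = ξ i * p := rfl

theorem q₂_mul_mulX_zero : q₂ * mulX 0 = mulX 0 * (q₂ + 1) := LinearMap.ext fun p => by
  simp only [q₂, Module.End.mul_apply, LinearMap.add_apply, Module.End.one_apply, euler_apply,
    mulX_apply, pderiv_mul, pderiv_X_self]
  ring

theorem euler_mul_euler_sub_one_mul_mulX_zero :
    euler * (euler - 1) * mulX 0 = mulX 0 * (euler * (euler - 1) + 2 • euler) :=
  LinearMap.ext fun p => by
    simp only [Module.End.mul_apply, LinearMap.add_apply, LinearMap.sub_apply, LinearMap.smul_apply,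
      Module.End.one_apply, euler_apply, mulX_apply, pderiv_mul, pderiv_X_self, map_sub, map_add,
      Derivation.map_one_eq_zero, zero_mul, zero_add]
    ring

theorem q₃_mul_mulX_zero (a : ℂ) : q₃ a * mulX 0 = mulX 0 * (q₃ a + q₂) := by
  have hrest : (mulX 1 * euler + mulX 2 + a • (pderiv 1).toLinearMap) * mulX 0 =
      mulX 0 * (mulX 1 * euler + mulX 2 + a • (pderiv 1).toLinearMap + mulX 1) :=
    LinearMap.ext fun p => by
      simp only [Module.End.mul_apply, LinearMap.add_apply, LinearMap.smul_apply, euler_apply,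
        mulX_apply, Derivation.coeFn_coe, pderiv_mul, pderiv_X_self, smul_eq_C_mul,
        pderiv_X_of_ne (show (0 : Fin 3) ≠ 1 by decide)]
      ring
  have hsplit : q₃ a * mulX 0 = (2⁻¹ : ℂ) • (euler * (euler - 1) * mulX 0) +
      (mulX 1 * euler + mulX 2 + a • (pderiv 1).toLinearMap) * mulX 0 := by
    simp only [q₃, add_mul, smul_mul_assoc, add_assoc]
  rw [hsplit, euler_mul_euler_sub_one_mul_mulX_zero, hrest]
  simp only [q₃, q₂, mul_add, mul_smul_comm]
  module

theorem q₃_mul_q₂ (a : ℂ) : q₃ a * q₂ = q₂ * q₃ a + a • 1 := LinearMap.ext fun p => by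
  simp only [q₂, q₃, Module.End.mul_apply, LinearMap.add_apply, LinearMap.sub_apply,
    LinearMap.smul_apply, Module.End.one_apply, euler_apply, mulX_apply, Derivation.coeFn_coe,
    pderiv_mul, pderiv_X_self, Derivation.map_one_eq_zero, map_sub, map_add, smul_eq_C_mul,
    pderiv_C, map_zero, pderiv_comm (1 : Fin 3) 0, pderiv_X_of_ne (show (1 : Fin 3) ≠ 0 by decide),
    pderiv_X_of_ne (show (2 : Fin 3) ≠ 0 by decide),
    pderiv_X_of_ne (show (0 : Fin 3) ≠ 1 by decide)]
  ring

theorem satisfiesRelations_op (a : ℂ) : SatisfiesRelations a (op a) where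
  rel₁ := by
    rw [op_zero, op_one, mul_assoc, q₂_mul_mulX_zero]
    noncomm_ring
  rel₂ := by
    rw [op_zero, op_one, op_two, mul_assoc, q₃_mul_mulX_zero]
    noncomm_ring
  rel₃ := by
    have e₃₂ : mulX 0 * q₃ a * (mulX 0 * q₂) = mulX 0 * mulX 0 * (q₃ a * q₂ + q₂ * q₂) := by
      rw [mul_assoc (mulX 0), ← mul_assoc (q₃ a), q₃_mul_mulX_zero]
      noncomm_ring
    have e₂₃ : mulX 0 * q₂ * (mulX 0 * q₃ a) = mulX 0 * mulX 0 * (q₂ * q₃ a + q₃ a) := by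
      rw [mul_assoc (mulX 0), ← mul_assoc q₂, q₂_mul_mulX_zero]
      noncomm_ring
    have e₂₂ : mulX 0 * q₂ * (mulX 0 * q₂) = mulX 0 * mulX 0 * (q₂ * q₂ + q₂) := by
      rw [mul_assoc (mulX 0), ← mul_assoc q₂, q₂_mul_mulX_zero]
      noncomm_ring
    rw [op_zero, op_one, op_two, e₃₂, e₂₃, e₂₂, q₃_mul_q₂]
    simp only [mul_add, mul_smul_comm, mul_one, mul_assoc]
    abel

theorem X_zero_mul_mem {n : ℕ} {p : V} (hp : p ∈ L n) : ξ 0 * p ∈ L n :=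
  X_mul_mem_weightedDegreeLT hp 0

theorem X_one_mul_mem {n : ℕ} {p : V} (hp : p ∈ L n) : ξ 1 * p ∈ L (n + 1) :=
  X_mul_mem_weightedDegreeLT hp 1

theorem euler_mem {n : ℕ} {p : V} (hp : p ∈ L n) : euler p ∈ L n :=
  X_zero_mul_mem (pderiv_mem_weightedDegreeLT hp 0)

theorem hasLeadingMonomial_op_zero (a : ℂ) {p : V} {μ : Fin 3 →₀ ℕ}
    (h : HasLeadingMonomial Fin.val p μ) :
    HasLeadingMonomial Fin.val (op a 0 p) (Finsupp.single 0 1 + μ) :=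
  h.X_mul 0

theorem hasLeadingMonomial_op_one (a : ℂ) {p : V} {μ : Fin 3 →₀ ℕ}
    (h : HasLeadingMonomial Fin.val p μ) :
    HasLeadingMonomial Fin.val (op a 1 p) (Finsupp.single 0 1 + Finsupp.single 1 1 + μ) := by
  have hsplit : op a 1 p = ξ 0 * (ξ 1 * p) + ξ 0 * euler p := by
    simp only [op_one, q₂, Module.End.mul_apply, LinearMap.add_apply, mulX_apply]
    ring
  have hweight : Finsupp.weight Fin.val (Finsupp.single 0 1 + (Finsupp.single 1 1 + μ)) =
      Finsupp.weight Fin.val μ + 1 := by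
    simp [Finsupp.weight_single, add_comm]
  rw [hsplit, add_assoc (Finsupp.single _ _)]
  refine ((h.X_mul 1).X_mul 0).add_of_mem ?_
  rw [hweight]
  exact X_zero_mul_mem (euler_mem h.mem_weightedDegreeLT_succ)

theorem hasLeadingMonomial_op_two (a : ℂ) {p : V} {μ : Fin 3 →₀ ℕ}
    (h : HasLeadingMonomial Fin.val p μ) :
    HasLeadingMonomial Fin.val (op a 2 p) (Finsupp.single 0 1 + Finsupp.single 2 1 + μ) := by
  have hsplit : op a 2 p = ξ 0 * (ξ 2 * p) + ξ 0 * ((2⁻¹ : ℂ) • euler ((euler - 1) p) +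
      ξ 1 * euler p + a • pderiv 1 p) := by
    simp only [op_two, q₃, Module.End.mul_apply, LinearMap.add_apply, LinearMap.smul_apply,
      mulX_apply, Derivation.coeFn_coe]
    ring
  have hweight : Finsupp.weight Fin.val (Finsupp.single 0 1 + (Finsupp.single 2 1 + μ)) =
      Finsupp.weight Fin.val μ + 2 := by
    simp [Finsupp.weight_single, add_comm]
  have hp₁ := h.mem_weightedDegreeLT_succ
  have hp₂ : p ∈ L (Finsupp.weight Fin.val μ + 2) := weightedDegreeLT_mono (Nat.le_succ _) hp₁
  rw [hsplit, add_assoc (Finsupp.single _ _)]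
  refine ((h.X_mul 2).X_mul 0).add_of_mem ?_
  rw [hweight]
  refine X_zero_mul_mem (add_mem (add_mem ?_ (X_one_mul_mem (euler_mem hp₁))) ?_)
  · exact Submodule.smul_mem _ _ (euler_mem (sub_mem (euler_mem hp₂) hp₂))
  · exact Submodule.smul_mem _ _ (pderiv_mem_weightedDegreeLT hp₂ 1)

noncomputable def pbwExponent (e : ℕ × ℕ × ℕ) : Fin 3 →₀ ℕ :=
  e.1 • Finsupp.single 0 1 + (e.2.1 • (Finsupp.single 0 1 + Finsupp.single 1 1) +
    e.2.2 • (Finsupp.single 0 1 + Finsupp.single 2 1))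

theorem pbwExponent_injective : Function.Injective pbwExponent := by
  rintro ⟨i, j, k⟩ ⟨i', j', k'⟩ h
  have h₀ := DFunLike.congr_fun h 0
  have h₁ := DFunLike.congr_fun h 1
  have h₂ := DFunLike.congr_fun h 2
  simp [pbwExponent] at h₀ h₁ h₂
  simp only [Prod.mk.injEq]
  omega

theorem hasLeadingMonomial_op_pbw (a : ℂ) (e : ℕ × ℕ × ℕ) :
    HasLeadingMonomial Fin.val ((op a 0 ^ e.1 * op a 1 ^ e.2.1 * op a 2 ^ e.2.2) 1)
      (pbwExponent e) := by
  have h₃ := (hasLeadingMonomial_one Fin.val).pow_apply (hasLeadingMonomial_op_two a) e.2.2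
  have h₂₃ := h₃.pow_apply (hasLeadingMonomial_op_one a) e.2.1
  have h₁₂₃ := h₂₃.pow_apply (hasLeadingMonomial_op_zero a) e.1
  rwa [add_zero] at h₁₂₃

theorem linearIndependent_op_pbw (a : ℂ) : LinearIndependent ℂ
    (fun e : ℕ × ℕ × ℕ => (op a 0 ^ e.1 * op a 1 ^ e.2.1 * op a 2 ^ e.2.2) 1) :=
  linearIndependent_of_triangular (fun e => Finsupp.weight Fin.val (pbwExponent e))
    (fun e => lcoeff ℂ (pbwExponent e))
    (fun e => by
      simp only [lcoeff_apply, (hasLeadingMonomial_op_pbw a e).coeff_self]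
      exact one_ne_zero)
    (fun e b hne hle => (hasLeadingMonomial_op_pbw a b).coeff_eq_zero hle
      (pbwExponent_injective.ne hne))

end Representation

variable (a : ℂ)

noncomputable def gen (i : Fin 3) : RingQuot (rel a) := RingQuot.mkAlgHom ℂ (rel a) (X i)

noncomputable def pbw (e : ℕ × ℕ × ℕ) : RingQuot (rel a) :=
  RingQuot.mkAlgHom ℂ (rel a) (X 0 ^ e.1 * X 1 ^ e.2.1 * X 2 ^ e.2.2)

noncomputable def pbwSpan : Submodule ℂ (RingQuot (rel a)) :=
  Submodule.span ℂ (Set.range (pbw a))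

theorem satisfiesRelations_gen : SatisfiesRelations a (gen a) :=
  (forall_map_S_eq_zero_iff a _).1 fun g hg => by
    simpa using RingQuot.mkAlgHom_rel ℂ (show rel a g 0 from ⟨hg, rfl⟩)

theorem linearIndependent_pbw : LinearIndependent ℂ (pbw a) := by
  let ρ := liftOfRelations (satisfiesRelations_op a)
  refine LinearIndependent.of_comp (LinearMap.applyₗ 1 ∘ₗ ρ.toLinearMap) ?_
  convert linearIndependent_op_pbw a with e
  simp [ρ, pbw, liftOfRelations_mk, X]

variable {a}

theorem pbw_succ_fst (i j k : ℕ) : pbw a (i + 1, j, k) = gen a 0 * pbw a (i, j, k) := by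
  simp only [pbw, gen, map_mul, map_pow, pow_succ', mul_assoc]

theorem pbw_zero_succ (j k : ℕ) : pbw a (0, j + 1, k) = gen a 1 * pbw a (0, j, k) := by
  simp only [pbw, gen, map_mul, map_pow, pow_zero, one_mul, pow_succ', mul_assoc]

theorem pbw_zero_zero_succ (k : ℕ) : pbw a (0, 0, k + 1) = gen a 2 * pbw a (0, 0, k) := by
  simp only [pbw, gen, map_mul, map_pow, pow_zero, one_mul, pow_succ']

theorem pbw_mem_pbwSpan (e : ℕ × ℕ × ℕ) : pbw a e ∈ pbwSpan a :=
  Submodule.subset_span ⟨e, rfl⟩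

theorem gen_zero_mul_mem {v : RingQuot (rel a)} (hv : v ∈ pbwSpan a) :
    gen a 0 * v ∈ pbwSpan a :=
  Submodule.mul_mem_span_range (fun ⟨i, j, k⟩ => pbw_succ_fst i j k ▸ pbw_mem_pbwSpan _) hv

theorem mul_mem_of_mul_gen_zero {x c : RingQuot (rel a)} (hc : ∀ v ∈ pbwSpan a, c * v ∈ pbwSpan a)
    (hx : x * gen a 0 = gen a 0 * x + gen a 0 * c) (h₀ : ∀ j k, x * pbw a (0, j, k) ∈ pbwSpan a)
    {v : RingQuot (rel a)} (hv : v ∈ pbwSpan a) : x * v ∈ pbwSpan a := by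
  refine Submodule.mul_mem_span_range (fun ⟨i, j, k⟩ => ?_) hv
  induction i with
  | zero => exact h₀ j k
  | succ i ih =>
    rw [pbw_succ_fst, ← mul_assoc, hx, add_mul, mul_assoc, mul_assoc]
    exact add_mem (gen_zero_mul_mem ih) (gen_zero_mul_mem (hc _ (pbw_mem_pbwSpan _)))

theorem gen_one_mul_mem {v : RingQuot (rel a)} (hv : v ∈ pbwSpan a) : gen a 1 * v ∈ pbwSpan a :=
  mul_mem_of_mul_gen_zero (fun _ => gen_zero_mul_mem) (satisfiesRelations_gen a).rel₁
    (fun j k => pbw_zero_succ j k ▸ pbw_mem_pbwSpan _) hv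

theorem gen_two_mul_mem {v : RingQuot (rel a)} (hv : v ∈ pbwSpan a) : gen a 2 * v ∈ pbwSpan a := by
  refine mul_mem_of_mul_gen_zero (fun _ => gen_one_mul_mem) (satisfiesRelations_gen a).rel₂
    (fun j k => ?_) hv
  induction j with
  | zero => exact pbw_zero_zero_succ k ▸ pbw_mem_pbwSpan _
  | succ j ih =>
    have hm := pbw_mem_pbwSpan (a := a) (0, j, k)
    rw [pbw_zero_succ, ← mul_assoc, (satisfiesRelations_gen a).rel₃]
    simp only [add_mul, sub_mul, smul_mul_assoc, mul_assoc]
    exact add_mem (sub_mem (sub_mem (add_mem (gen_one_mul_mem ih)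
      (gen_one_mul_mem (gen_one_mul_mem hm))) (gen_zero_mul_mem ih))
      (gen_zero_mul_mem (gen_one_mul_mem hm)))
      (Submodule.smul_mem _ a (gen_zero_mul_mem (gen_zero_mul_mem hm)))

variable (a)

theorem adjoin_range_gen : Algebra.adjoin ℂ (Set.range (gen a)) = ⊤ := by
  rw [show gen a = RingQuot.mkAlgHom ℂ (rel a) ∘ FreeAlgebra.ι ℂ from rfl, Set.range_comp,
    Algebra.adjoin_image, FreeAlgebra.adjoin_range_ι, Algebra.map_top, AlgHom.range_eq_top]
  exact RingQuot.mkAlgHom_surjective ℂ (rel a)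

theorem pbwSpan_eq_top : pbwSpan a = ⊤ := by
  refine Submodule.eq_top_of_one_mem_of_mul_mem (adjoin_range_gen a) ?_ ?_
  · simpa [pbw] using pbw_mem_pbwSpan (a := a) (0, 0, 0)
  · rintro _ ⟨i, rfl⟩ v hv
    fin_cases i
    exacts [gen_zero_mul_mem hv, gen_one_mul_mem hv, gen_two_mul_mem hv]

end NicholsR19

/-- the images in `F/I` of the monomials `x₁^{a₁} x₂^{a₂} x₃^{a₃}` form a `ℂ`-basis. -/
theorem basis_R19_t_one (a : ℂ) :
    LinearIndependent ℂ (fun e : ℕ × ℕ × ℕ =>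
      RingQuot.mkAlgHom ℂ (rel a) (X 0 ^ e.1 * X 1 ^ e.2.1 * X 2 ^ e.2.2)) ∧
    Submodule.span ℂ (Set.range (fun e : ℕ × ℕ × ℕ =>
      RingQuot.mkAlgHom ℂ (rel a) (X 0 ^ e.1 * X 1 ^ e.2.1 * X 2 ^ e.2.2))) = ⊤ :=
  ⟨NicholsR19.linearIndependent_pbw a, NicholsR19.pbwSpan_eq_top a⟩
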